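/- arXiv:1204.6443 — 5 statements merged into one kernel-verified Lean document; each statement's English description precedes it below -/
import Mathlib

section
/- Let V be a finite-dimensional complex inner product space and let Θ : V × V × V × V → ℂ be a map that is linear in the first and third variables, conjugate-linear in the second and fourth variables, and satisfies Θ(y,x,w,z) = conj(Θ(x,y,z,w)) and Θ(x,y,z,w) = Θ(z,y,x,w) for all x,y,z,w. Define H(x) = Θ(x,x,x,x)/‖x‖⁴ and B(x,y) = Θ(x,x,y,y)/(‖x‖²‖y‖²) for nonzero x,y. If x is a nonzero vector maximizing H over all nonzero vectors, and H(x) = -A with A > 0, then B(x,y) ≤ -A/2 for every nonzero y ∈ V. -/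
lemma aux_le {d c b a : ℝ} (h : ∀ t : ℝ, 0 < t → d*t + c*t^2 + b*t^3 + a*t^4 ≤ 0) :
    d ≤ 0 := by
  by_contra hd
  push_neg at hd
  set M : ℝ := |c| + |b| + |a| + 1 with hM
  have hM1 : 1 ≤ M := by
    have := abs_nonneg c; have := abs_nonneg b; have := abs_nonneg a; linarith
  set t : ℝ := min 1 (d / (2*M)) with ht
  have hMpos : 0 < M := by linarith
  have ht0 : 0 < t := lt_min one_pos (by positivity)
  have ht1 : t ≤ 1 := min_le_left _ _
  have ht2 : t ≤ d / (2*M) := min_le_right _ _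
  have h1 := h t ht0
  have ht3 : t^3 ≤ t^2 := by nlinarith
  have ht4 : t^4 ≤ t^2 := by nlinarith
  have hMt : M * t ≤ d / 2 := by
    have h' := mul_le_mul_of_nonneg_left ht2 hMpos.le
    have h'' : M * (d / (2*M)) = d / 2 := by field_simp
    linarith
  have e1 : -|c| * t^2 ≤ c * t^2 := by nlinarith [sq_nonneg t, neg_abs_le c]
  have e2 : -|b| * t^2 ≤ b * t^3 := by
    have h5 : -|b| * t^2 ≤ -|b| * t^3 := by nlinarith [abs_nonneg b]
    nlinarith [neg_abs_le b, pow_pos ht0 3]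
  have e3 : -|a| * t^2 ≤ a * t^4 := by
    have h5 : -|a| * t^2 ≤ -|a| * t^4 := by nlinarith [abs_nonneg a]
    nlinarith [neg_abs_le a, pow_pos ht0 4]
  have key : d * t ≤ M * t^2 := by nlinarith [sq_nonneg t]
  have h6 : M * t * t ≤ (d/2) * t := mul_le_mul_of_nonneg_right hMt ht0.le
  nlinarith [mul_pos hd ht0]

lemma aux_lin_zero {d c b a : ℝ} (h : ∀ t : ℝ, d*t + c*t^2 + b*t^3 + a*t^4 ≤ 0) :
    d = 0 := by
  have h1 : d ≤ 0 := aux_le fun t _ => h t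
  have h2 : -d ≤ 0 := by
    apply aux_le (c := c) (b := -b) (a := a)
    intro t ht
    nlinarith [h (-t)]
  linarith

lemma aux_quad_le {c b a : ℝ} (h : ∀ t : ℝ, c*t^2 + b*t^3 + a*t^4 ≤ 0) :
    c ≤ 0 := by
  by_contra hc
  push_neg at hc
  set M : ℝ := |b| + |a| + 1 with hM
  have hM1 : 1 ≤ M := by
    have := abs_nonneg b; have := abs_nonneg a; linarith
  have hMpos : 0 < M := by linarith
  set t : ℝ := min 1 (c / (2*M)) with ht
  have ht0 : 0 < t := lt_min one_pos (by positivity)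
  have ht1 : t ≤ 1 := min_le_left _ _
  have ht2 : t ≤ c / (2*M) := min_le_right _ _
  have h1 := h t
  have ht4 : t^4 ≤ t^3 := by nlinarith [pow_pos ht0 3]
  have hMt : M * t ≤ c / 2 := by
    have h' := mul_le_mul_of_nonneg_left ht2 hMpos.le
    have h'' : M * (c / (2*M)) = c / 2 := by field_simp
    linarith
  have e2 : -|b| * t^3 ≤ b * t^3 := by nlinarith [neg_abs_le b, pow_pos ht0 3]
  have e3 : -|a| * t^3 ≤ a * t^4 := by
    have h5 : -|a| * t^3 ≤ -|a| * t^4 := by nlinarith [abs_nonneg a]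
    nlinarith [neg_abs_le a, pow_pos ht0 4]
  have key : c * t^2 ≤ M * t^3 := by nlinarith [pow_pos ht0 3]
  have h6 : M * t^3 ≤ (c/2) * t^2 := by
    have := mul_le_mul_of_nonneg_right hMt (sq_nonneg t)
    nlinarith
  nlinarith [mul_pos (mul_pos hc ht0) ht0]

/-- If `Θ` has the symmetries of the curvature tensor of a Kähler metric,
`x` is a nonzero vector maximizing the holomorphic sectional curvature
`H(v) = Θ(v,v,v,v)/‖v‖⁴`, and `H(x) = -A` with `A > 0`, then the holomorphic bisectional
curvature `B(x,y) = Θ(x,x,y,y)/(‖x‖²‖y‖²)` satisfies `B(x,y) ≤ -A/2` for all nonzero `y`. -/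
theorem stmt0 (V : Type*) [NormedAddCommGroup V] [InnerProductSpace ℂ V]
    [FiniteDimensional ℂ V]
    (Θ : V → V → V → V → ℂ)
    (hlin1 : ∀ y z w, IsLinearMap ℂ (fun x => Θ x y z w))
    (hlin3 : ∀ x y w, IsLinearMap ℂ (fun z => Θ x y z w))
    (hadd2 : ∀ x y y' z w, Θ x (y + y') z w = Θ x y z w + Θ x y' z w)
    (hsmul2 : ∀ x y z w (c : ℂ), Θ x (c • y) z w = starRingEnd ℂ c * Θ x y z w)
    (hadd4 : ∀ x y z w w', Θ x y z (w + w') = Θ x y z w + Θ x y z w')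
    (hsmul4 : ∀ x y z w (c : ℂ), Θ x y z (c • w) = starRingEnd ℂ c * Θ x y z w)
    (hherm : ∀ x y z w, Θ y x w z = starRingEnd ℂ (Θ x y z w))
    (hkahler : ∀ x y z w, Θ x y z w = Θ z y x w)
    (x : V) (hx : x ≠ 0)
    (hmax : ∀ v : V, v ≠ 0 →
      (Θ v v v v / (‖v‖ : ℂ) ^ 4).re ≤ (Θ x x x x / (‖x‖ : ℂ) ^ 4).re)
    (A : ℝ) (hA : 0 < A)
    (hHx : Θ x x x x / (‖x‖ : ℂ) ^ 4 = -(A : ℂ)) :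
    ∀ y : V, y ≠ 0 →
      (Θ x x y y / ((‖x‖ : ℂ) ^ 2 * (‖y‖ : ℂ) ^ 2)).re ≤ -A / 2 := by
  intro y hy
  -- linearity rewrite rules
  have add1 : ∀ a b p q r, Θ (a+b) p q r = Θ a p q r + Θ b p q r :=
    fun a b p q r => (hlin1 p q r).map_add a b
  have smul1 : ∀ (c : ℂ) a p q r, Θ (c•a) p q r = c * Θ a p q r :=
    fun c a p q r => by rw [(hlin1 p q r).map_smul, smul_eq_mul]
  have add3 : ∀ p q a b r, Θ p q (a+b) r = Θ p q a r + Θ p q b r :=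
    fun p q a b r => (hlin3 p q r).map_add a b
  have smul3 : ∀ (c : ℂ) p q a r, Θ p q (c•a) r = c * Θ p q a r :=
    fun c p q a r => by rw [(hlin3 p q r).map_smul, smul_eq_mul]
  -- norms
  have hxn : (0:ℝ) < ‖x‖ := norm_pos_iff.mpr hx
  have hyn : (0:ℝ) < ‖y‖ := norm_pos_iff.mpr hy
  have hx4 : Θ x x x x = ((-(A * ‖x‖^4) : ℝ) : ℂ) := by
    have h4 : ((‖x‖:ℂ))^4 ≠ 0 :=
      pow_ne_zero _ (Complex.ofReal_ne_zero.mpr hxn.ne')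
    field_simp at hHx
    rw [div_eq_iff h4] at hHx; rw [hHx]; push_cast; ring
  have hxre : (Θ x x x x).re = -(A * ‖x‖^4) := by rw [hx4, Complex.ofReal_re]
  -- the orthogonal decomposition
  set α : ℂ := (inner ℂ x y : ℂ) / ((‖x‖:ℂ)^2) with hα
  set z : V := y - α • x with hz
  have hyz : y = α • x + z := by rw [hz]; abel
  have hinner_xx : (inner ℂ x x : ℂ) = ((‖x‖:ℂ))^2 := inner_self_eq_norm_sq_to_K x
  have hx2ne : ((‖x‖:ℂ))^2 ≠ 0 := pow_ne_zero _ (Complex.ofReal_ne_zero.mpr hxn.ne')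
  have horth : (inner ℂ x z : ℂ) = 0 := by
    rw [hz, inner_sub_right, inner_smul_right, hinner_xx, hα]
    field_simp
    rw [div_self (Complex.ofReal_ne_zero.mpr hxn.ne')]; ring
  -- Pythagoras
  have hpyth : ‖y‖^2 = Complex.normSq α * ‖x‖^2 + ‖z‖^2 := by
    have h0 : (inner ℂ (α • x) z : ℂ) = 0 := by
      rw [inner_smul_left, horth, mul_zero]
    rw [hyz, norm_add_sq (𝕜 := ℂ), h0, norm_smul]
    simp [mul_pow, Complex.sq_norm]
  -- the core inequality machine
  have hf : ∀ v : V, (inner ℂ x v : ℂ) = 0 → ∀ t : ℝ,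
      ((Θ v x x x + Θ x v x x + Θ x x v x + Θ x x x v).re) * t
      + ((Θ v v x x + Θ v x v x + Θ v x x v + Θ x v v x + Θ x v x v + Θ x x v v).re
          + A * (2 * ‖x‖^2 * ‖v‖^2)) * t^2
      + ((Θ v v v x + Θ v v x v + Θ v x v v + Θ x v v v).re) * t^3
      + ((Θ v v v v).re + A * ‖v‖^4) * t^4 ≤ 0 := by
    intro v hv t
    set p : V := x + (t:ℂ) • v with hp
    have hp2 : ‖p‖^2 = ‖x‖^2 + t^2*‖v‖^2 := by
      rw [hp, norm_add_sq (𝕜 := ℂ), inner_smul_right, hv, norm_smul]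
      simp [mul_pow, sq_abs]
    have hp2pos : (0:ℝ) < ‖x‖^2 + t^2*‖v‖^2 := by positivity
    have hpne : p ≠ 0 := by
      intro h0
      rw [h0] at hp2
      simp at hp2
      nlinarith [sq_nonneg (t*‖v‖)]
    have hmax' := hmax p hpne
    rw [hHx] at hmax'
    have hre1 : ((‖p‖:ℂ))^4 = (((‖p‖^4 : ℝ)) : ℂ) := by push_cast; ring
    rw [hre1, Complex.div_ofReal_re] at hmax'
    have hppos : (0:ℝ) < ‖p‖ := norm_pos_iff.mpr hpne
    have hp4pos : (0:ℝ) < ‖p‖^4 := by positivity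
    have hmax'' : (Θ p p p p).re ≤ -A * ‖p‖^4 := by
      rw [div_le_iff₀ hp4pos] at hmax'
      simpa using hmax'
    have hp4 : ‖p‖^4 = (‖x‖^2 + t^2*‖v‖^2)^2 := by
      rw [show ‖p‖^4 = (‖p‖^2)^2 by ring, hp2]
    rw [hp4] at hmax''
    have hexp : Θ p p p p
        = Θ x x x x
        + (t:ℂ) * (Θ v x x x + Θ x v x x + Θ x x v x + Θ x x x v)
        + (t:ℂ)^2 * (Θ v v x x + Θ v x v x + Θ v x x v + Θ x v v x + Θ x v x v + Θ x x v v)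
        + (t:ℂ)^3 * (Θ v v v x + Θ v v x v + Θ v x v v + Θ x v v v)
        + (t:ℂ)^4 * (Θ v v v v) := by
      rw [hp]
      simp only [add1, hadd2, add3, hadd4, smul1, hsmul2, smul3, hsmul4, Complex.conj_ofReal]
      ring
    have hexp_re : (Θ p p p p).re
        = -(A * ‖x‖^4)
        + t * (Θ v x x x + Θ x v x x + Θ x x v x + Θ x x x v).re
        + t^2 * (Θ v v x x + Θ v x v x + Θ v x x v + Θ x v v x + Θ x v x v + Θ x x v v).re
        + t^3 * (Θ v v v x + Θ v v x v + Θ v x v v + Θ x v v v).re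
        + t^4 * (Θ v v v v).re := by
      rw [hexp, hx4]
      simp [Complex.add_re, Complex.mul_re, ← Complex.ofReal_pow]
    nlinarith [hmax'', hexp_re]
  -- symmetry consequences
  have sym1 : Θ z x x x = Θ x x z x := hkahler z x x x
  have sym2 : Θ x z x x = starRingEnd ℂ (Θ x x z x) := by rw [hherm z x x x, sym1]
  have sym4 : Θ x x x z = starRingEnd ℂ (Θ x x z x) := hherm x x z x
  have hv1 : (inner ℂ x ((Complex.I) • z) : ℂ) = 0 := by
    rw [inner_smul_right, horth, mul_zero]
  -- first variation
  have d1 := aux_lin_zero (fun t => hf z horth t)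
  have d2 := aux_lin_zero (fun t => hf (Complex.I • z) hv1 t)
  have hfirst : Θ x x z x = 0 := by
    have r1 : (Θ x x z x).re = 0 := by
      rw [sym1, sym2, sym4] at d1
      simp [Complex.add_re, Complex.conj_re] at d1
      linarith
    have r2 : (Θ x x z x).im = 0 := by
      simp only [smul1, hsmul2, smul3, hsmul4, Complex.conj_I] at d2
      rw [sym1, sym2, sym4] at d2
      simp [Complex.add_re, Complex.mul_re, Complex.I_re, Complex.I_im,
        Complex.conj_re, Complex.conj_im] at d2
      linarith
    exact Complex.ext r1 r2
  have hfirst' : Θ x x x z = 0 := by rw [sym4, hfirst]; simp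
  -- second variation machine
  have hq : ∀ v : V, (inner ℂ x v : ℂ) = 0 → Θ x x v x = 0 →
      4*(Θ x x v v).re + 2*(Θ v x v x).re + A * (2 * ‖x‖^2 * ‖v‖^2) ≤ 0 := by
    intro v hv hv0
    have sv1 : Θ v x x x = 0 := by rw [hkahler v x x x, hv0]
    have sv2 : Θ x v x x = 0 := by rw [hherm v x x x, sv1]; simp
    have sv4 : Θ x x x v = 0 := by rw [hherm x x v x, hv0]; simp
    have svzz : Θ v x x v = Θ x x v v := hkahler v x x v
    have svzz2 : Θ x v v x = starRingEnd ℂ (Θ x x v v) := by rw [hherm v x x v, svzz]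
    have svzz1 : Θ v v x x = starRingEnd ℂ (Θ x x v v) := by rw [hkahler v v x x, svzz2]
    have svS : Θ x v x v = starRingEnd ℂ (Θ v x v x) := hherm v x v x
    have hc : (Θ v x x x + Θ x v x x + Θ x x v x + Θ x x x v).re = 0 := by
      rw [sv1, sv2, sv4, hv0]; simp
    have q := aux_quad_le
      (c := (Θ v v x x + Θ v x v x + Θ v x x v + Θ x v v x + Θ x v x v + Θ x x v v).re
          + A * (2 * ‖x‖^2 * ‖v‖^2))
      (b := (Θ v v v x + Θ v v x v + Θ v x v v + Θ x v v v).re)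
      (a := (Θ v v v v).re + A * ‖v‖^4)
      (fun t => by
        have h := hf v hv t
        rw [hc] at h
        linarith)
    rw [svzz1, svzz, svzz2, svS] at q
    simp [Complex.add_re, Complex.conj_re] at q
    linarith
  -- apply to z and I•z
  have h1 := hq z horth hfirst
  have hIz0 : Θ x x (Complex.I • z) x = 0 := by rw [smul3, hfirst, mul_zero]
  have h2 := hq (Complex.I • z) hv1 hIz0
  have hIzn : ‖(Complex.I : ℂ) • z‖ = ‖z‖ := by
    rw [norm_smul]; simp
  have e1 : Θ x x (Complex.I • z) (Complex.I • z) = Θ x x z z := by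
    rw [smul3, hsmul4, Complex.conj_I]
    rw [show Complex.I * (-Complex.I * Θ x x z z) = -(Complex.I*Complex.I) * Θ x x z z by ring,
      Complex.I_mul_I]
    ring
  have e2 : Θ (Complex.I • z) x (Complex.I • z) x = -(Θ z x z x) := by
    rw [smul1, smul3, show Complex.I * (Complex.I * Θ z x z x) = (Complex.I*Complex.I) * Θ z x z x by ring,
      Complex.I_mul_I]
    ring
  rw [e1, e2, hIzn] at h2
  have hsecond : (Θ x x z z).re ≤ -(A/2) * (‖x‖^2 * ‖z‖^2) := by
    simp only [Complex.neg_re] at h2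
    linarith
  -- final computation
  have hxyy : Θ x x y y = α * (starRingEnd ℂ α) * Θ x x x x + Θ x x z z := by
    nth_rewrite 1 [hyz]; nth_rewrite 1 [hyz]
    simp only [add3, hadd4, smul3, hsmul4, hfirst, hfirst', mul_zero, add_zero, zero_add]
    ring
  have hre : (Θ x x y y).re = Complex.normSq α * (-(A * ‖x‖^4)) + (Θ x x z z).re := by
    rw [hxyy, hx4, show α * (starRingEnd ℂ α) = ((Complex.normSq α : ℝ) : ℂ) from Complex.mul_conj α,
      ← Complex.ofReal_mul, Complex.add_re, Complex.ofReal_re]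
  -- assemble
  have hden : ((‖x‖:ℂ))^2 * ((‖y‖:ℂ))^2 = (((‖x‖^2 * ‖y‖^2 : ℝ)) : ℂ) := by push_cast; ring
  rw [hden, Complex.div_ofReal_re, div_le_iff₀ (by positivity)]
  have hnsq : 0 ≤ Complex.normSq α := Complex.normSq_nonneg α
  rw [hre]
  have h7 : ‖x‖^2 * ‖y‖^2 = Complex.normSq α * ‖x‖^4 + ‖x‖^2*‖z‖^2 := by
    rw [hpyth]; ring
  have haux : 0 ≤ A * (Complex.normSq α * ‖x‖^4) := by positivity
  rw [h7]
  nlinarith [hsecond]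
end

section
/- Let V be a finite-dimensional complex inner product space, Θ as above with the Kähler symmetries, and let x be a unit vector with Θ(x,x,x,y) = H(x)⟨x,y⟩ for a unit vector y (first-order criticality). Then for c ∈ ℂ near 0, H(x+cy) = H(x) - 2H(x)|c|² - 4H(x)(Re(c̄⟨x,y⟩))² + 4B(x,y)|c|² + 2Re(c̄²Θ(x,y,x,y)) + O(|c|³), where H(v) = Θ(v,v,v,v)/‖v‖⁴ and B(x,y) = Θ(x,x,y,y). -/
open Complex Asymptotics Filter

private lemma bigO_helper {f : ℂ → ℂ} {C : ℝ} {n : ℕ} (h : ∀ c : ℂ, ‖f c‖ ≤ C * ‖c‖ ^ n) :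
    f =O[nhds (0 : ℂ)] fun c => ‖c‖ ^ n := by
  rw [Asymptotics.isBigO_iff]
  refine ⟨C, Filter.Eventually.of_forall fun c => ?_⟩
  simpa [_root_.abs_of_nonneg (pow_nonneg (norm_nonneg c) n)] using h c

private lemma bigO_pow {m n : ℕ} (h : n ≤ m) :
    (fun c : ℂ => (‖c‖ : ℝ) ^ m) =O[nhds (0 : ℂ)] fun c => ‖c‖ ^ n := by
  rw [Asymptotics.isBigO_iff]
  refine ⟨1, ?_⟩
  have key : ∀ c : ℂ, dist c 0 < 1 → ‖(‖c‖ : ℝ) ^ m‖ ≤ 1 * ‖(‖c‖ : ℝ) ^ n‖ := by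
    intro c hc
    rw [dist_zero_right] at hc
    rw [Real.norm_eq_abs, Real.norm_eq_abs, _root_.abs_of_nonneg (pow_nonneg (norm_nonneg c) m),
      _root_.abs_of_nonneg (pow_nonneg (norm_nonneg c) n), one_mul]
    exact pow_le_pow_of_le_one (norm_nonneg c) hc.le h
  exact Metric.eventually_nhds_iff.mpr ⟨1, one_pos, fun {c} hc => key c hc⟩

private lemma bigO_mul {f g : ℂ → ℂ} {a b : ℕ} (hf : f =O[nhds (0 : ℂ)] fun c => ‖c‖ ^ a)
    (hg : g =O[nhds (0 : ℂ)] fun c => ‖c‖ ^ b) :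
    (fun c => f c * g c) =O[nhds (0 : ℂ)] fun c => ‖c‖ ^ (a + b) :=
  (hf.mul hg).congr_right fun c => (pow_add _ a b).symm

/-- the second-order expansion of the holomorphic sectional curvature
`H(x+cy)` around a unit vector `x` satisfying the first-order criticality condition
`Θ(x,x,x,y) = H(x)⟨x,y⟩`, for a unit vector `y`, as `c → 0` in `ℂ`:
`H(x+cy) = H(x) - 2H(x)|c|² - 4H(x)(Re(c̄⟨x,y⟩))² + 4B(x,y)|c|² + 2Re(c̄²Θ(x,y,x,y)) + O(|c|³)`,
where `H(v) = Θ(v,v,v,v)/‖v‖⁴`, `B(x,y) = Θ(x,x,y,y)`, and `⟨x,y⟩` is the hermitian inner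
product, linear in the first variable (so `⟨x,y⟩ = ⟪y,x⟫_ℂ` in Mathlib's convention). -/
theorem stmt2 (V : Type*) [NormedAddCommGroup V] [InnerProductSpace ℂ V]
    [FiniteDimensional ℂ V]
    (Θ : V → V → V → V → ℂ)
    (hlin1 : ∀ y z w, IsLinearMap ℂ (fun x => Θ x y z w))
    (hlin3 : ∀ x y w, IsLinearMap ℂ (fun z => Θ x y z w))
    (hadd2 : ∀ x y y' z w, Θ x (y + y') z w = Θ x y z w + Θ x y' z w)
    (hsmul2 : ∀ x y z w (c : ℂ), Θ x (c • y) z w = starRingEnd ℂ c * Θ x y z w)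
    (hadd4 : ∀ x y z w w', Θ x y z (w + w') = Θ x y z w + Θ x y z w')
    (hsmul4 : ∀ x y z w (c : ℂ), Θ x y z (c • w) = starRingEnd ℂ c * Θ x y z w)
    (hherm : ∀ x y z w, Θ y x w z = starRingEnd ℂ (Θ x y z w))
    (hkahler : ∀ x y z w, Θ x y z w = Θ z y x w)
    (x y : V) (hx1 : ‖x‖ = 1) (hy1 : ‖y‖ = 1)
    (hcrit : Θ x x x y = (Θ x x x x / (‖x‖ : ℂ) ^ 4) * (@inner ℂ V _ y x)) :
    (fun c : ℂ =>
        Θ (x + c • y) (x + c • y) (x + c • y) (x + c • y) / (‖x + c • y‖ : ℂ) ^ 4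
        - ((Θ x x x x / (‖x‖ : ℂ) ^ 4)
           - 2 * (Θ x x x x / (‖x‖ : ℂ) ^ 4) * (‖c‖ : ℂ) ^ 2
           - 4 * (Θ x x x x / (‖x‖ : ℂ) ^ 4)
               * (((starRingEnd ℂ c * @inner ℂ V _ y x).re : ℂ)) ^ 2
           + 4 * Θ x x y y * (‖c‖ : ℂ) ^ 2
           + 2 * (((starRingEnd ℂ c ^ 2 * Θ x y x y).re : ℂ))))
      =O[nhds (0 : ℂ)] fun c : ℂ => ‖c‖ ^ 3 := by
  simp only [hx1, Complex.ofReal_one, one_pow, div_one] at hcrit ⊢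
  have h1a : ∀ (a a' b c d : V), Θ (a + a') b c d = Θ a b c d + Θ a' b c d :=
    fun a a' b c d => (hlin1 b c d).map_add a a'
  have h1s : ∀ (a b c d : V) (t : ℂ), Θ (t • a) b c d = t * Θ a b c d :=
    fun a b c d t => by simpa [smul_eq_mul] using (hlin1 b c d).map_smul t a
  have h3a : ∀ (a b b' cc d : V), Θ a cc (b + b') d = Θ a cc b d + Θ a cc b' d :=
    fun a b b' cc d => (hlin3 a cc d).map_add b b'
  have h3s : ∀ (a b cc d : V) (t : ℂ), Θ a cc (t • b) d = t * Θ a cc b d :=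
    fun a b cc d t => by simpa [smul_eq_mul] using (hlin3 a cc d).map_smul t b
  have hmc : ∀ c : ℂ, ((‖c‖ : ℝ) : ℂ) ^ 2 = c * starRingEnd ℂ c := by
    intro c
    rw [Complex.mul_conj, Complex.normSq_eq_norm_sq]; push_cast; ring
  have hd : ∀ c : ℂ, ((‖x + c • y‖ : ℝ) : ℂ) ^ 2
      = 1 + 2 * (((starRingEnd ℂ c * (@inner ℂ V _ y x)).re : ℝ) : ℂ)
        + c * starRingEnd ℂ c := by
    intro c
    rw [← Complex.ofReal_pow, @norm_add_sq ℂ]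
    have h1 : @inner ℂ V _ x (c • y) = c * starRingEnd ℂ (@inner ℂ V _ y x) := by
      rw [inner_smul_right, ← inner_conj_symm]
    have h2 : RCLike.re (@inner ℂ V _ x (c • y)) = (starRingEnd ℂ c * (@inner ℂ V _ y x)).re := by
      rw [h1, RCLike.re_to_complex, ← Complex.conj_re (starRingEnd ℂ c * (@inner ℂ V _ y x)),
        map_mul, Complex.conj_conj]
    rw [h2, hx1, norm_smul, hy1]
    push_cast
    rw [mul_one, hmc c]
    ring
  set s : ℂ := @inner ℂ V _ y x with hs
  set A : ℂ := Θ x x x x with hA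
  set B : ℂ := Θ x x y y with hB
  set T : ℂ := Θ x y x y with hT
  have hAr : starRingEnd ℂ A = A := (hherm x x x x).symm
  have hBr : starRingEnd ℂ B = B := (hherm x x y y).symm
  have hc4 : Θ x x x y = A * s := hcrit
  have hxxyx : Θ x x y x = A * starRingEnd ℂ s := by
    rw [hherm x x x y, hc4, map_mul, hAr]
  have hyxxx : Θ y x x x = A * starRingEnd ℂ s := by
    rw [hkahler y x x x, hxxyx]
  have hxyxx : Θ x y x x = A * s := by
    rw [hherm y x x x, hyxxx, map_mul, hAr, Complex.conj_conj]
  have hyxyx : Θ y x y x = starRingEnd ℂ T := hherm x y x y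
  have hyxxy : Θ y x x y = B := hkahler y x x y
  have hxyyx : Θ x y y x = B := by rw [hherm y x x y, hyxxy, hBr]
  have hyyxx : Θ y y x x = B := by rw [hkahler y y x x, hxyyx]
  have hN : ∀ c : ℂ, Θ (x + c • y) (x + c • y) (x + c • y) (x + c • y)
      = A + 4 * A * (((starRingEnd ℂ c * s).re : ℝ) : ℂ)
        + 2 * (((starRingEnd ℂ c ^ 2 * T).re : ℝ) : ℂ)
        + 4 * B * (c * starRingEnd ℂ c)
        + (c ^ 2 * starRingEnd ℂ c * (Θ y y y x + Θ y x y y) + c * (starRingEnd ℂ c) ^ 2 * (Θ y y x y + Θ x y y y) + c ^ 2 * (starRingEnd ℂ c) ^ 2 * Θ y y y y) := by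
    intro c
    simp only [h1a, h1s, h3a, h3s, hadd2, hsmul2, hadd4, hsmul4]
    rw [hc4, hxxyx, hyxxx, hxyxx, hyxyx, hyxxy, hxyyx, hyyxx]
    rw [Complex.re_eq_add_conj, Complex.re_eq_add_conj]
    simp only [map_mul, map_pow, Complex.conj_conj]
    ring
  -- norm of s
  have hs1 : ‖s‖ ≤ 1 := by
    calc ‖s‖ ≤ ‖y‖ * ‖x‖ := norm_inner_le_norm y x
    _ = 1 := by rw [hx1, hy1, one_mul]
  -- elementary big-O facts
  have bρ : (fun c : ℂ => (((starRingEnd ℂ c * s).re : ℝ) : ℂ)) =O[nhds (0 : ℂ)] fun c => ‖c‖ ^ 1 := by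
    apply bigO_helper (C := 1)
    intro c
    rw [Complex.norm_real, Real.norm_eq_abs, pow_one, one_mul]
    calc |(starRingEnd ℂ c * s).re| ≤ ‖starRingEnd ℂ c * s‖ := by
          exact Complex.abs_re_le_norm _
    _ = ‖c‖ * ‖s‖ := by rw [norm_mul, RCLike.norm_conj]
    _ ≤ ‖c‖ * 1 := mul_le_mul_of_nonneg_left hs1 (norm_nonneg c)
    _ = ‖c‖ := mul_one _
  have bm : (fun c : ℂ => c * starRingEnd ℂ c) =O[nhds (0 : ℂ)] fun c => ‖c‖ ^ 2 := by
    apply bigO_helper (C := 1)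
    intro c
    rw [norm_mul, RCLike.norm_conj, one_mul, sq]
  have bm1 : (fun c : ℂ => c * starRingEnd ℂ c) =O[nhds (0 : ℂ)] fun c => ‖c‖ ^ 1 :=
    bm.trans (bigO_pow one_le_two)
  have bτ : (fun c : ℂ => (((starRingEnd ℂ c ^ 2 * T).re : ℝ) : ℂ)) =O[nhds (0 : ℂ)] fun c => ‖c‖ ^ 2 := by
    apply bigO_helper (C := ‖T‖)
    intro c
    rw [Complex.norm_real, Real.norm_eq_abs]
    calc |(starRingEnd ℂ c ^ 2 * T).re| ≤ ‖starRingEnd ℂ c ^ 2 * T‖ := by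
          exact Complex.abs_re_le_norm _
    _ = ‖c‖ ^ 2 * ‖T‖ := by rw [norm_mul, norm_pow, RCLike.norm_conj]
    _ = ‖T‖ * ‖c‖ ^ 2 := mul_comm _ _
  have bu : (fun c : ℂ => 2 * (((starRingEnd ℂ c * s).re : ℝ) : ℂ) + (c * starRingEnd ℂ c)) =O[nhds (0 : ℂ)] fun c => ‖c‖ ^ 1 :=
    (bρ.const_mul_left 2).add bm1
  have bU : (fun c : ℂ => (2 * (2 * (((starRingEnd ℂ c * s).re : ℝ) : ℂ) + (c * starRingEnd ℂ c)) + (2 * (((starRingEnd ℂ c * s).re : ℝ) : ℂ) + (c * starRingEnd ℂ c)) * (2 * (((starRingEnd ℂ c * s).re : ℝ) : ℂ) + (c * starRingEnd ℂ c)))) =O[nhds (0 : ℂ)] fun c => ‖c‖ ^ 1 :=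
    (bu.const_mul_left 2).add ((bigO_mul bu bu).trans (bigO_pow one_le_two))
  have bQ2 : (fun c : ℂ => (-2 * A * (c * starRingEnd ℂ c) - 4 * A * ((((starRingEnd ℂ c * s).re : ℝ) : ℂ) * (((starRingEnd ℂ c * s).re : ℝ) : ℂ)) + 4 * B * (c * starRingEnd ℂ c) + 2 * (((starRingEnd ℂ c ^ 2 * T).re : ℝ) : ℂ))) =O[nhds (0 : ℂ)] fun c => ‖c‖ ^ 2 :=
    (((bm.const_mul_left (-2 * A)).sub ((bigO_mul bρ bρ).const_mul_left (4 * A))).add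
      (bm.const_mul_left (4 * B))).add (bτ.const_mul_left 2)
  have bg1 : (fun c : ℂ => c ^ 2 * starRingEnd ℂ c * (Θ y y y x + Θ y x y y))
      =O[nhds (0 : ℂ)] fun c => ‖c‖ ^ 3 := by
    apply bigO_helper (C := ‖Θ y y y x + Θ y x y y‖)
    intro c
    rw [norm_mul, norm_mul, norm_pow, RCLike.norm_conj]
    exact le_of_eq (by ring)
  have bg2 : (fun c : ℂ => c * (starRingEnd ℂ c) ^ 2 * (Θ y y x y + Θ x y y y))
      =O[nhds (0 : ℂ)] fun c => ‖c‖ ^ 3 := by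
    apply bigO_helper (C := ‖Θ y y x y + Θ x y y y‖)
    intro c
    rw [norm_mul, norm_mul, norm_pow, RCLike.norm_conj]
    exact le_of_eq (by ring)
  have bg3 : (fun c : ℂ => c ^ 2 * (starRingEnd ℂ c) ^ 2 * Θ y y y y)
      =O[nhds (0 : ℂ)] fun c => ‖c‖ ^ 3 := by
    refine IsBigO.trans ?_ (bigO_pow (by norm_num : 3 ≤ 4))
    apply bigO_helper (C := ‖Θ y y y y‖)
    intro c
    rw [norm_mul, norm_mul, norm_pow, norm_pow, RCLike.norm_conj]
    exact le_of_eq (by ring)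
  have bG : (fun c : ℂ => (c ^ 2 * starRingEnd ℂ c * (Θ y y y x + Θ y x y y) + c * (starRingEnd ℂ c) ^ 2 * (Θ y y x y + Θ x y y y) + c ^ 2 * (starRingEnd ℂ c) ^ 2 * Θ y y y y)) =O[nhds (0 : ℂ)] fun c => ‖c‖ ^ 3 :=
    (bg1.add bg2).add bg3
  have bE : (fun c : ℂ => ((c ^ 2 * starRingEnd ℂ c * (Θ y y y x + Θ y x y y) + c * (starRingEnd ℂ c) ^ 2 * (Θ y y x y + Θ x y y y) + c ^ 2 * (starRingEnd ℂ c) ^ 2 * Θ y y y y) - 4 * A * ((((starRingEnd ℂ c * s).re : ℝ) : ℂ) * (c * starRingEnd ℂ c)) - A * ((c * starRingEnd ℂ c) * (c * starRingEnd ℂ c)) - (-2 * A * (c * starRingEnd ℂ c) - 4 * A * ((((starRingEnd ℂ c * s).re : ℝ) : ℂ) * (((starRingEnd ℂ c * s).re : ℝ) : ℂ)) + 4 * B * (c * starRingEnd ℂ c) + 2 * (((starRingEnd ℂ c ^ 2 * T).re : ℝ) : ℂ)) * (2 * (2 * (((starRingEnd ℂ c * s).re : ℝ) : ℂ) + (c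 * starRingEnd ℂ c)) + (2 * (((starRingEnd ℂ c * s).re : ℝ) : ℂ) + (c * starRingEnd ℂ c)) * (2 * (((starRingEnd ℂ c * s).re : ℝ) : ℂ) + (c * starRingEnd ℂ c))))) =O[nhds (0 : ℂ)] fun c => ‖c‖ ^ 3 :=
    ((bG.sub ((bigO_mul bρ bm).const_mul_left (4 * A))).sub
      ((bigO_mul bm bm).trans (bigO_pow (by norm_num : 3 ≤ 4)) |>.const_mul_left A)).sub
      (bigO_mul bQ2 bU)
  have bw : (fun c : ℂ => ((((1 : ℂ) + 2 * (((starRingEnd ℂ c * s).re : ℝ) : ℂ) + (c * starRingEnd ℂ c)) ^ 2)⁻¹)) =O[nhds (0 : ℂ)] fun _ => (1 : ℝ) := by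
    have hconj : Continuous (fun c : ℂ => starRingEnd ℂ c) := Complex.continuous_conj
    have hcont : Continuous (fun c : ℂ =>
        (((1 : ℂ) + 2 * (((starRingEnd ℂ c * s).re : ℝ) : ℂ) + (c * starRingEnd ℂ c)) ^ 2)) := by
      apply Continuous.pow
      exact (continuous_const.add (continuous_const.mul
        (Complex.continuous_ofReal.comp (Complex.continuous_re.comp
          (hconj.mul continuous_const))))).add (continuous_id.mul hconj)
    have htend : Tendsto (fun c : ℂ =>
        (((1 : ℂ) + 2 * (((starRingEnd ℂ c * s).re : ℝ) : ℂ) + (c * starRingEnd ℂ c)) ^ 2)) (nhds 0) (nhds 1) := by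
      have := hcont.tendsto 0
      simpa using this
    have := (htend.inv₀ one_ne_zero).isBigO_one ℝ
    simpa using this
  have final : (fun c : ℂ => ((c ^ 2 * starRingEnd ℂ c * (Θ y y y x + Θ y x y y) + c * (starRingEnd ℂ c) ^ 2 * (Θ y y x y + Θ x y y y) + c ^ 2 * (starRingEnd ℂ c) ^ 2 * Θ y y y y) - 4 * A * ((((starRingEnd ℂ c * s).re : ℝ) : ℂ) * (c * starRingEnd ℂ c)) - A * ((c * starRingEnd ℂ c) * (c * starRingEnd ℂ c)) - (-2 * A * (c * starRingEnd ℂ c) - 4 * A * ((((starRingEnd ℂ c * s).re : ℝ) : ℂ) * (((starRingEnd ℂ c * s).re : ℝ) : ℂ)) + 4 * B * (c * starRingEnd ℂ c) + 2 * (((starRingEnd ℂ c ^ 2 * T).re : ℝ) : ℂ)) * (2 * (2 * (((starRingEnd ℂ c * s).re : ℝ) : ℂ) + (c * starRingEnd ℂ c)) + (2 * (((starRingEnd ℂ c * s).re : ℝ) : ℂ) + (c * starRingEnd ℂ c)) * (2 * (((starRingEnd ℂ c * s).re : ℝ) : ℂ) + (c * starRingEnd ℂ c)))) * ((((1 : ℂ)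 + 2 * (((starRingEnd ℂ c * s).re : ℝ) : ℂ) + (c * starRingEnd ℂ c)) ^ 2)⁻¹)) =O[nhds (0 : ℂ)] fun c : ℂ => ‖c‖ ^ 3 :=
    (bE.mul bw).congr_right fun c => mul_one _
  refine final.congr' ?_ Filter.EventuallyEq.rfl
  filter_upwards [Metric.ball_mem_nhds (0 : ℂ) one_pos] with c hc
  rw [mem_ball_zero_iff] at hc
  have hne : x + c • y ≠ 0 := by
    intro h0
    have hx' : x = -(c • y) := eq_neg_of_add_eq_zero_left h0
    have : (1 : ℝ) = ‖c‖ := by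
      rw [← hx1, hx', norm_neg, norm_smul, hy1, mul_one]
    linarith
  have hd0 : ((‖x + c • y‖ : ℝ) : ℂ) ≠ 0 :=
    Complex.ofReal_ne_zero.mpr (norm_ne_zero_iff.mpr hne)
  have hD : ((1 : ℂ) + 2 * (((starRingEnd ℂ c * s).re : ℝ) : ℂ) + (c * starRingEnd ℂ c)) ≠ 0 := by
    rw [← hd c]
    exact pow_ne_zero 2 hd0
  rw [hN c, hmc c,
    show ((‖x + c • y‖ : ℝ) : ℂ) ^ 4 = (((‖x + c • y‖ : ℝ) : ℂ) ^ 2) ^ 2 by ring, hd c]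
  set ρc : ℂ := (((starRingEnd ℂ c * s).re : ℝ) : ℂ) with hρc
  set τc : ℂ := (((starRingEnd ℂ c ^ 2 * T).re : ℝ) : ℂ) with hτc
  set cc : ℂ := starRingEnd ℂ c with hcc
  rw [← div_eq_mul_inv, eq_sub_iff_add_eq, div_add' _ _ _ (pow_ne_zero 2 hD)]
  congr 1
  ring
end

section
/- Let V be a finite-dimensional complex inner product space, Θ with the Kähler symmetries, and x a unit vector at which the holomorphic sectional curvature H(v) = Θ(v,v,v,v)/‖v‖⁴ attains its maximum over nonzero v. Then for every vector y, Θ(x,x,x,y) = H(x)⟨x,y⟩. -/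
/-- first-order consequence of maximality: if the holomorphic sectional
curvature `H(v) = Θ(v,v,v,v)/‖v‖⁴` attains its maximum over nonzero vectors at a unit
vector `x`, then `Θ(x,x,x,y) = H(x)⟨x,y⟩` for every `y`, where `⟨x,y⟩` is the hermitian
inner product linear in the first variable (`⟨x,y⟩ = ⟪y,x⟫_ℂ` in Mathlib's convention). -/
theorem stmt3 (V : Type*) [NormedAddCommGroup V] [InnerProductSpace ℂ V]
    [FiniteDimensional ℂ V]
    (Θ : V → V → V → V → ℂ)
    (hlin1 : ∀ y z w, IsLinearMap ℂ (fun x => Θ x y z w))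
    (hlin3 : ∀ x y w, IsLinearMap ℂ (fun z => Θ x y z w))
    (hadd2 : ∀ x y y' z w, Θ x (y + y') z w = Θ x y z w + Θ x y' z w)
    (hsmul2 : ∀ x y z w (c : ℂ), Θ x (c • y) z w = starRingEnd ℂ c * Θ x y z w)
    (hadd4 : ∀ x y z w w', Θ x y z (w + w') = Θ x y z w + Θ x y z w')
    (hsmul4 : ∀ x y z w (c : ℂ), Θ x y z (c • w) = starRingEnd ℂ c * Θ x y z w)
    (hherm : ∀ x y z w, Θ y x w z = starRingEnd ℂ (Θ x y z w))
    (hkahler : ∀ x y z w, Θ x y z w = Θ z y x w)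
    (x : V) (hx1 : ‖x‖ = 1)
    (hmax : ∀ v : V, v ≠ 0 →
      (Θ v v v v / (‖v‖ : ℂ) ^ 4).re ≤ (Θ x x x x / (‖x‖ : ℂ) ^ 4).re) :
    ∀ y : V, Θ x x x y = (Θ x x x x / (‖x‖ : ℂ) ^ 4) * (@inner ℂ V _ y x) := by
  have hx4 : ((‖x‖ : ℂ)) ^ 4 = 1 := by rw [hx1]; norm_num
  simp only [hx4, div_one] at hmax ⊢
  have himH : (Θ x x x x).im = 0 := by
    have h := congrArg Complex.im (hherm x x x x)
    simp [Complex.conj_im] at h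
    linarith
  set H : ℝ := (Θ x x x x).re with hHdef
  have key : ∀ y : V, (Θ x x x y).re = H * (@inner ℂ V _ y x).re := by
    intro y
    by_cases hy : y = 0
    · subst hy
      have h0 : Θ x x x 0 = 0 := by
        have := hsmul4 x x x 0 0
        simpa using this
      simp [h0]
    have hyn : (0:ℝ) < ‖y‖ := norm_pos_iff.mpr hy
    set r : ℝ := (@inner ℂ V _ x y).re with hrdef
    -- expansion helpers
    have h1 : ∀ (t:ℝ) (a b z w u : V), Θ (a + (t:ℂ)•b) z w u = Θ a z w u + (t:ℂ) * Θ b z w u := by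
      intro t a b z w u
      rw [(hlin1 z w u).map_add, (hlin1 z w u).map_smul]
      rfl
    have h3 : ∀ (t:ℝ) (a z b w u : V), Θ a z (b + (t:ℂ)•w) u = Θ a z b u + (t:ℂ) * Θ a z w u := by
      intro t a z b w u
      rw [(hlin3 a z u).map_add, (hlin3 a z u).map_smul]
      rfl
    have h2 : ∀ (t:ℝ) (a b w z u : V), Θ a (b + (t:ℂ)•w) z u = Θ a b z u + (t:ℂ) * Θ a w z u := by
      intro t a b w z u
      rw [hadd2, hsmul2, Complex.conj_ofReal]
    have h4 : ∀ (t:ℝ) (a b z w u : V), Θ a b z (w + (t:ℂ)•u) = Θ a b z w + (t:ℂ) * Θ a b z u := by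
      intro t a b z w u
      rw [hadd4, hsmul4, Complex.conj_ofReal]
    have hexp : ∀ t : ℝ, Θ (x + (t:ℂ)•y) (x + (t:ℂ)•y) (x + (t:ℂ)•y) (x + (t:ℂ)•y)
        = Θ x x x x
          + (t:ℂ) * (Θ y x x x + Θ x y x x + Θ x x y x + Θ x x x y)
          + (t:ℂ)^2 * (Θ y y x x + Θ y x y x + Θ y x x y + Θ x y y x + Θ x y x y + Θ x x y y)
          + (t:ℂ)^3 * (Θ y y y x + Θ y y x y + Θ y x y y + Θ x y y y)
          + (t:ℂ)^4 * Θ y y y y := by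
      intro t
      simp only [h1, h2, h3, h4]
      ring
    have hnorm : ∀ t : ℝ, ‖x + (t:ℂ)•y‖^2 = 1 + 2*r*t + ‖y‖^2*t^2 := by
      intro t
      rw [@norm_add_sq ℂ, hx1, inner_smul_right, norm_smul]
      simp only [RCLike.re_to_complex, Complex.re_ofReal_mul, Complex.norm_real,
        mul_pow, sq_abs, Real.norm_eq_abs, ← hrdef]
      ring
    -- coefficients
    set a1 : ℝ := (Θ y x x x + Θ x y x x + Θ x x y x + Θ x x x y).re - H * (4*r) with ha1def
    set a2 : ℝ := (Θ y y x x + Θ y x y x + Θ y x x y + Θ x y y x + Θ x y x y + Θ x x y y).re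
      - H * (4*r^2 + 2*‖y‖^2) with ha2def
    set a3 : ℝ := (Θ y y y x + Θ y y x y + Θ y x y y + Θ x y y y).re - H * (4*r*‖y‖^2) with ha3def
    set a4 : ℝ := (Θ y y y y).re - H * (‖y‖^2)^2 with ha4def
    set p : ℝ → ℝ := fun t => a1*t + (a2*t^2 + (a3*t^3 + a4*t^4)) with hpdef
    have hpoly : ∀ t : ℝ,
        (Θ (x + (t:ℂ)•y) (x + (t:ℂ)•y) (x + (t:ℂ)•y) (x + (t:ℂ)•y)).re
          - H * ‖x + (t:ℂ)•y‖^4 = p t := by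
      intro t
      have hv4 : ‖x + (t:ℂ)•y‖^4 = (1 + 2*r*t + ‖y‖^2*t^2)^2 := by
        rw [show (4:ℕ) = 2*2 from rfl, pow_mul, hnorm t]
      rw [hexp t, hv4, hpdef, ha1def, ha2def, ha3def, ha4def]
      simp only [Complex.add_re, ← Complex.ofReal_pow, Complex.re_ofReal_mul]
      ring
    have hb : ∀ t : ℝ, |t| < 1/‖y‖ → p t ≤ 0 := by
      intro t ht
      have hvne : x + (t:ℂ)•y ≠ 0 := by
        intro h
        have hxv : x = -((t:ℂ)•y) := by
          rw [add_eq_zero_iff_eq_neg] at h; exact h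
        have : (1:ℝ) = |t| * ‖y‖ := by
          rw [← hx1, hxv, norm_neg, norm_smul, Complex.norm_real]
          rfl
        have h2 : |t| * ‖y‖ < (1/‖y‖) * ‖y‖ := by
          exact mul_lt_mul_of_pos_right ht hyn
        rw [one_div_mul_cancel (ne_of_gt hyn)] at h2
        linarith
      have hm := hmax _ hvne
      have hpos : (0:ℝ) < ‖x + (t:ℂ)•y‖ := norm_pos_iff.mpr hvne
      have hcast : ((‖x + (t:ℂ)•y‖ : ℂ))^4 = ((‖x + (t:ℂ)•y‖^4 : ℝ) : ℂ) := by push_cast; ring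
      rw [hcast, Complex.div_ofReal_re] at hm
      have hle := (div_le_iff₀ (by positivity)).mp hm
      have := hpoly t
      linarith
    have h00 : p 0 = 0 := by simp [hpdef]
    have hlm : IsLocalMax p 0 := by
      have : ∀ᶠ t in nhds (0:ℝ), p t ≤ p 0 := by
        rw [Metric.eventually_nhds_iff]
        refine ⟨1/‖y‖, by positivity, fun t ht => ?_⟩
        rw [h00]
        apply hb
        simpa [Real.dist_eq] using ht
      exact this
    have hd : HasDerivAt p a1 0 := by
      have h := ((hasDerivAt_id (0:ℝ)).const_mul a1).add
        (((hasDerivAt_pow 2 (0:ℝ)).const_mul a2).add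
          (((hasDerivAt_pow 3 (0:ℝ)).const_mul a3).add
            ((hasDerivAt_pow 4 (0:ℝ)).const_mul a4)))
      simp at h
      convert h using 1 <;> rfl
    have ha1 : a1 = 0 := hlm.hasDerivAt_eq_zero hd
    -- compute the linear coefficient
    have e1 : Θ y x x x = Θ x x y x := hkahler y x x x
    have e2 : Θ x y x x = starRingEnd ℂ (Θ y x x x) := hherm y x x x
    have e3 : Θ x x x y = starRingEnd ℂ (Θ x x y x) := hherm x x y x
    have hT1 : (Θ y x x x + Θ x y x x + Θ x x y x + Θ x x x y).re = 4 * (Θ x x x y).re := by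
      rw [e2, e3, e1]
      simp only [Complex.add_re, Complex.conj_re]
      ring
    have hr2 : (@inner ℂ V _ y x).re = r := by
      rw [hrdef]
      have h := congrArg Complex.re (inner_conj_symm (𝕜 := ℂ) x y)
      rw [Complex.conj_re] at h
      exact h
    rw [ha1def, hT1] at ha1
    rw [hr2]
    linarith
  intro y
  have k1 := key y
  have k2 := key (Complex.I • y)
  rw [hsmul4, inner_smul_left] at k2
  simp only [Complex.conj_I] at k2
  have k2' : (Θ x x x y).im = H * (@inner ℂ V _ y x).im := by
    have l1 : (-Complex.I * Θ x x x y).re = (Θ x x x y).im := by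
      simp [Complex.mul_re]
    have l2 : (-Complex.I * (@inner ℂ V _ y x)).re = (@inner ℂ V _ y x).im := by
      simp [Complex.mul_re]
    rw [l1, l2] at k2
    exact k2
  apply Complex.ext
  · rw [Complex.mul_re, himH]
    simpa using k1
  · rw [Complex.mul_im, himH]
    simpa using k2'
end

section
/- Let G be a group and ρ : G → GL(n,k) a representation over a field k. Suppose the semisimplification of ρ has finite image and the image of ρ is infinite. Then there exists a finite-index subgroup H ≤ G such that the restriction of ρ to H has image contained in the strictly upper unitriangular group (after conjugation), and the abelianization of H is infinite (assuming char k = 0 and H finitely generated). -/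
open Matrix

/-- Let `ρ : G → GL(n,k)`, `char k = 0`. Suppose the semisimplification of
`ρ` has finite image (expressed concretely: `ρ` is conjugate to a block-upper-triangular
form, with respect to a monotone block function `b`, whose block-diagonal part has finite
range — this is the induced representation on the associated graded, whose finiteness of
image is equivalent to that of the semisimplification) and that the image of `ρ` is
infinite. Then there is a finite-index subgroup `H ≤ G` such that `ρ|_H` is conjugate into
the strictly upper unitriangular group, and (assuming `H` finitely generated, with
`char k = 0`) the abelianization of `H` is infinite. -/
theorem stmt6 (G : Type*) [Group G] (k : Type*) [Field k] [CharZero k] (n : ℕ)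
    (ρ : G →* GL (Fin n) k)
    (hss : ∃ (g : GL (Fin n) k) (b : Fin n → ℕ), Monotone b ∧
      (∀ x : G, ((g⁻¹ * ρ x * g : GL (Fin n) k) : Matrix (Fin n) (Fin n) k).BlockTriangular b) ∧
      (Set.range (fun x : G => fun i j : Fin n =>
        if b i = b j then ((g⁻¹ * ρ x * g : GL (Fin n) k) : Matrix (Fin n) (Fin n) k) i j
        else 0)).Finite)
    (hinf : (Set.range ρ).Infinite) :
    ∃ H : Subgroup G, H.FiniteIndex ∧
      (∃ u : GL (Fin n) k, ∀ h ∈ H,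
        ((u⁻¹ * ρ h * u : GL (Fin n) k) : Matrix (Fin n) (Fin n) k).BlockTriangular id ∧
        ∀ i : Fin n, ((u⁻¹ * ρ h * u : GL (Fin n) k) : Matrix (Fin n) (Fin n) k) i i = 1) ∧
      (Group.FG H → Infinite (Abelianization H)) := by
  classical
  obtain ⟨g, b, hb, htri, hfin⟩ := hss
  set M : G → Matrix (Fin n) (Fin n) k :=
    fun x => ((g⁻¹ * ρ x * g : GL (Fin n) k) : Matrix (Fin n) (Fin n) k) with hMdef
  have hMmul : ∀ x y : G, M (x * y) = M x * M y := by
    intro x y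
    have h1 : (g⁻¹ * ρ (x * y) * g : GL (Fin n) k)
        = (g⁻¹ * ρ x * g) * (g⁻¹ * ρ y * g) := by
      rw [_root_.map_mul]; group
    show ((g⁻¹ * ρ (x*y) * g : GL (Fin n) k) : Matrix (Fin n) (Fin n) k) = _
    rw [h1, Units.val_mul]
  have htriM : ∀ x : G, (M x).BlockTriangular b := htri
  have hM1 : M 1 = 1 := by
    have h1 : (g⁻¹ * ρ 1 * g : GL (Fin n) k) = 1 := by rw [_root_.map_one]; group
    simp only [hMdef, h1, Units.val_one]
  set D : G → Matrix (Fin n) (Fin n) k :=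
    fun x => Matrix.of fun i j => if b i = b j then M x i j else 0 with hDdef
  have hD1 : D 1 = 1 := by
    funext i j
    simp only [hDdef, Matrix.of_apply, hM1, Matrix.one_apply]
    by_cases hij : i = j
    · simp [hij]
    · simp [Matrix.one_apply, hij]
  have hDmul : ∀ x y : G, D (x * y) = D x * D y := by
    intro x y
    funext i j
    simp only [hDdef, Matrix.of_apply, hMmul, Matrix.mul_apply]
    by_cases hij : b i = b j
    · rw [if_pos hij]
      apply Finset.sum_congr rfl
      intro l _
      by_cases hil : b i = b l
      · rw [if_pos hil, if_pos (hil ▸ hij)]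
      · rw [if_neg hil]
        rcases lt_or_gt_of_ne (fun h => hil h.symm) with hlt | hgt
        · -- b l < b i : M x i l = 0
          rw [htriM x hlt, zero_mul, zero_mul]
        · -- b i < b l hence b j < b l : M y l j = 0
          rw [htriM y (hij ▸ hgt), mul_zero, zero_mul]
    · rw [if_neg hij]
      symm
      apply Finset.sum_eq_zero
      intro l _
      by_cases hil : b i = b l
      · rw [if_neg (fun h : b l = b j => hij (hil.trans h)), mul_zero]
      · rw [if_neg hil, zero_mul]
  have hDinvmul : ∀ x : G, D x⁻¹ * D x = 1 := by
    intro x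
    rw [← hDmul, inv_mul_cancel, hD1]
  set H : Subgroup G :=
    { carrier := { x | D x = 1 }
      one_mem' := hD1
      mul_mem' := by
        intro a c ha hc
        show D (a * c) = 1
        rw [hDmul, ha, hc, one_mul]
      inv_mem' := by
        intro a ha
        show D a⁻¹ = 1
        have := hDinvmul a
        rwa [ha, mul_one] at this } with hHdef
  have hmemH : ∀ x : G, x ∈ H ↔ D x = 1 := fun x => Iff.rfl
  -- the quotient is finite
  have hlift : ∀ x y : G, (QuotientGroup.leftRel H).r x y → D x = D y := by
    intro x y hxy
    have hxy' : x⁻¹ * y ∈ H := (QuotientGroup.leftRel_apply).mp hxy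
    have : D (x * (x⁻¹ * y)) = D x * D (x⁻¹ * y) := hDmul _ _
    rw [(hmemH _).mp hxy', mul_one] at this
    rw [← this, mul_inv_cancel_left]
  have hfinQ : Finite (G ⧸ H) := by
    have hfinD : (Set.range D).Finite := hfin
    have hmemr : ∀ q : G ⧸ H, Quotient.lift D hlift q ∈ Set.range D := by
      intro q
      induction q using Quotient.ind with
      | _ x => exact ⟨x, rfl⟩
    have := hfinD.to_subtype
    refine Finite.of_injective (fun q => (⟨Quotient.lift D hlift q, hmemr q⟩ :
      (Set.range D))) ?_
    · intro q₁ q₂ hq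
      induction q₁ using Quotient.ind with
      | _ x =>
      induction q₂ using Quotient.ind with
      | _ y =>
      have hDxy : D x = D y := congrArg Subtype.val hq
      refine Quotient.sound (QuotientGroup.leftRel_apply.mpr ?_)
      show D (x⁻¹ * y) = 1
      rw [hDmul, ← hDxy, hDinvmul]
  -- unitriangularity on H
  have hpart2 : ∀ h ∈ H, (M h).BlockTriangular id ∧ ∀ i : Fin n, M h i i = 1 := by
    intro h hh
    have hDh : D h = 1 := (hmemH h).mp hh
    constructor
    · intro i j hij
      have hij' : (j : Fin n) ≠ i := ne_of_lt hij
      rcases lt_or_eq_of_le (hb (le_of_lt hij)) with hlt | heq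
      · exact htriM h hlt
      · have := congrFun (congrFun hDh i) j
        simp only [hDdef, Matrix.of_apply, Matrix.one_apply_ne (Ne.symm hij')] at this
        rwa [if_pos (show b i = b j from heq.symm)] at this
    · intro i
      have := congrFun (congrFun hDh i) i
      simpa only [hDdef, Matrix.of_apply, if_pos rfl, ↓reduceIte, Matrix.one_apply_eq] using this
  refine ⟨H, (Subgroup.finiteIndex_of_finite_quotient (H := H)), ⟨g, fun h hh => hpart2 h hh⟩, ?_⟩
  intro _
  -- there is a nontrivial element of M on H
  have hnontriv : ∃ h ∈ H, M h ≠ 1 := by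
    by_contra hall
    push_neg at hall
    have hρ : ∀ h ∈ H, ρ h = 1 := by
      intro h hh
      have hMh : (g⁻¹ * ρ h * g : GL (Fin n) k) = 1 := Units.ext (by
        rw [Units.val_one]; exact hall h hh)
      have : ρ h = g * (g⁻¹ * ρ h * g) * g⁻¹ := by group
      rw [hMh] at this
      rw [this]; group
    have hliftρ : ∀ x y : G, (QuotientGroup.leftRel H).r x y → ρ x = ρ y := by
      intro x y hxy
      have hxy' : x⁻¹ * y ∈ H := (QuotientGroup.leftRel_apply).mp hxy
      have : ρ (x * (x⁻¹ * y)) = ρ x * ρ (x⁻¹ * y) := map_mul _ _ _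
      rw [hρ _ hxy', mul_one] at this
      rw [← this, mul_inv_cancel_left]
    have hsub : Set.range ρ ⊆ Set.range (Quotient.lift (fun x => ρ x) hliftρ :
        G ⧸ H → GL (Fin n) k) := by
      rintro _ ⟨x, rfl⟩
      exact ⟨QuotientGroup.mk x, rfl⟩
    exact hinf ((Set.finite_range _).subset hsub)
  obtain ⟨h₀, hh₀, hM₀⟩ := hnontriv
  have hentry : ∃ i j : Fin n, (i : ℕ) < j ∧ M h₀ i j ≠ 0 := by
    have : ∃ i j : Fin n, M h₀ i j ≠ (1 : Matrix (Fin n) (Fin n) k) i j := by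
      by_contra hc
      push_neg at hc
      exact hM₀ (by funext i j; exact hc i j)
    obtain ⟨i, j, hij⟩ := this
    rcases lt_trichotomy (i : ℕ) (j : ℕ) with hlt | heq | hgt
    · refine ⟨i, j, hlt, ?_⟩
      rwa [Matrix.one_apply_ne (fun h => by rw [h] at hlt; exact lt_irrefl _ hlt)] at hij
    · exfalso
      have hij' : i = j := Fin.ext heq
      subst hij'
      exact hij (((hpart2 h₀ hh₀).2 i).trans (Matrix.one_apply_eq i).symm)
    · exfalso
      apply hij
      rw [(hpart2 h₀ hh₀).1 (show id j < id i from hgt),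
        Matrix.one_apply_ne (fun h => by rw [h] at hgt; exact lt_irrefl _ hgt)]
  -- minimal superdiagonal distance
  set S : Set ℕ := { e | 0 < e ∧ ∃ h ∈ H, ∃ i j : Fin n, (j : ℕ) = i + e ∧ M h i j ≠ 0 }
    with hSdef
  have hSne : S.Nonempty := by
    obtain ⟨i, j, hlt, hne⟩ := hentry
    exact ⟨(j : ℕ) - i, Nat.sub_pos_of_lt hlt, h₀, hh₀, i, j,
      (Nat.add_sub_cancel' (le_of_lt hlt)).symm, hne⟩
  set d : ℕ := sInf S with hddef
  have hdS : d ∈ S := Nat.sInf_mem hSne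
  have hdpos : 0 < d := hdS.1
  have hmin : ∀ h ∈ H, ∀ i j : Fin n, (i : ℕ) < j → (j : ℕ) < i + d → M h i j = 0 := by
    intro h hh i j h1 h2
    by_contra hne
    have heS : (j : ℕ) - i ∈ S :=
      ⟨Nat.sub_pos_of_lt h1, h, hh, i, j, (Nat.add_sub_cancel' (le_of_lt h1)).symm, hne⟩
    have := Nat.sInf_le heS
    omega
  -- additivity on the d-th superdiagonal
  have hadd : ∀ h₁ ∈ H, ∀ h₂ ∈ H, ∀ i j : Fin n, (j : ℕ) = i + d →
      M (h₁ * h₂) i j = M h₁ i j + M h₂ i j := by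
    intro h₁ hh₁ h₂ hh₂ i j hji
    have hijne : i ≠ j := by
      intro h; rw [h] at hji; omega
    rw [hMmul, Matrix.mul_apply]
    have hsum : ∑ l, M h₁ i l * M h₂ l j = ∑ l ∈ ({i, j} : Finset (Fin n)),
        M h₁ i l * M h₂ l j := by
      symm
      apply Finset.sum_subset (Finset.subset_univ _)
      intro l _ hl
      simp only [Finset.mem_insert, Finset.mem_singleton, not_or] at hl
      obtain ⟨hli, hlj⟩ := hl
      rcases lt_trichotomy (l : ℕ) (i : ℕ) with h1 | h1 | h1
      · rw [(hpart2 h₁ hh₁).1 (show id l < id i from h1), zero_mul]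
      · exact absurd (Fin.ext h1) hli
      · rcases lt_trichotomy (l : ℕ) (j : ℕ) with h2 | h2 | h2
        · rw [hmin h₁ hh₁ i l h1 (by omega), zero_mul]
        · exact absurd (Fin.ext h2) hlj
        · rw [(hpart2 h₂ hh₂).1 (show id j < id l from h2), mul_zero]
    rw [hsum, Finset.sum_pair hijne, (hpart2 h₁ hh₁).2 i, (hpart2 h₂ hh₂).2 j,
      one_mul, mul_one]
    exact add_comm _ _
  -- the homomorphism to the additive group of the d-th superdiagonal
  set φ : H → (Fin n → Fin n → k) := fun h => fun i j =>
    if (j : ℕ) = (i : ℕ) + d then M (h : G) i j else 0 with hφdef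
  have hφmul : ∀ h₁ h₂ : H, φ (h₁ * h₂) = φ h₁ + φ h₂ := by
    intro h₁ h₂
    funext i j
    simp only [hφdef, Pi.add_apply]
    by_cases hij : (j : ℕ) = (i : ℕ) + d
    · simp only [hij, if_true]
      exact hadd h₁ h₁.2 h₂ h₂.2 i j hij
    · simp [hij]
  set F : H →* Multiplicative (Fin n → Fin n → k) :=
    { toFun := fun h => Multiplicative.ofAdd (φ h)
      map_one' := by
        have : φ 1 = 0 := by
          funext i j
          simp only [hφdef]
          by_cases hij : (j : ℕ) = (i : ℕ) + d
          · have hne : i ≠ j := by intro h; rw [h] at hij; omega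
            simp only [hij, if_true, OneMemClass.coe_one, hM1,
              Matrix.one_apply_ne hne, Pi.zero_apply]
          · simp [hij]
        simp [this]
      map_mul' := by
        intro h₁ h₂
        simp only [hφmul, ofAdd_add] } with hFdef
  -- conclude
  by_contra hni
  rw [not_infinite_iff_finite] at hni
  obtain ⟨-, h₁, hh₁, i₁, j₁, hji₁, hne₁⟩ := hdS
  set h₁' : H := ⟨h₁, hh₁⟩ with hh₁'def
  set a : Abelianization H := Abelianization.of h₁' with hadef
  have hm : 0 < orderOf a := orderOf_pos a
  have hpow : a ^ orderOf a = 1 := pow_orderOf_eq_one a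
  have hF : F h₁' ^ orderOf a = 1 := by
    have := congrArg (Abelianization.lift F) hpow
    rwa [map_pow, Abelianization.lift_apply_of, _root_.map_one] at this
  have : Multiplicative.ofAdd (orderOf a • φ h₁') = 1 := by
    rw [ofAdd_nsmul]
    exact hF
  have h0 : orderOf a • φ h₁' = 0 := by
    have := congrArg Multiplicative.toAdd this
    simpa using this
  have h1 : (orderOf a : k) * M h₁ i₁ j₁ = 0 := by
    have := congrFun (congrFun h0 i₁) j₁
    simp only [Pi.smul_apply, Pi.zero_apply, hφdef, hji₁, if_true, smul_eq_mul,
      nsmul_eq_mul] at this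
    simpa [hh₁'def] using this
  have : M h₁ i₁ j₁ = 0 :=
    (mul_eq_zero.mp h1).resolve_left (Nat.cast_ne_zero.mpr (by omega))
  exact hne₁ this
end

section
/- Let Γ be a finitely generated subgroup of GL(n,ℚ) such that for every prime p, the image of Γ in GL(n,ℚ_p) is bounded (i.e., conjugate in GL(n,ℚ_p) to a subgroup of GL(n,ℤ_p)). Then Γ is conjugate in GL(n,ℚ) to a subgroup of GL(n,ℤ). -/
open Matrix Module


lemma int_of_padicNorm_le_one (q : ℚ) (h : ∀ p : ℕ, p.Prime → padicNorm p q ≤ 1) :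
    ∃ z : ℤ, q = z := by
  by_cases hq : q = 0
  · exact ⟨0, by simp [hq]⟩
  refine ⟨q.num, ?_⟩
  suffices hd : q.den = 1 by
    conv_lhs => rw [← Rat.num_div_den q]; simp [hd]
  by_contra hd
  obtain ⟨p, hp, hpd⟩ := Nat.exists_prime_and_dvd hd
  haveI : Fact p.Prime := ⟨hp⟩
  have hnum : ¬ (p : ℤ) ∣ q.num := by
    intro hdvd
    have h1 : p ∣ q.num.natAbs := Int.natCast_dvd_natCast.mp (Int.dvd_natAbs.mpr hdvd)
    exact hp.one_lt.ne' (Nat.Coprime.eq_one_of_dvd (Nat.Coprime.coprime_dvd_left h1 q.reduced) hpd)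
  have hval : padicValRat p q < 0 := by
    rw [padicValRat]
    have h1 : padicValInt p q.num = 0 := padicValInt.eq_zero_of_not_dvd hnum
    have h2 : 1 ≤ padicValNat p q.den := one_le_padicValNat_of_dvd q.pos.ne' hpd
    omega
  have := h p hp
  rw [padicNorm.eq_zpow_of_nonzero hq] at this
  have hlt : (1:ℚ) < (p:ℚ) ^ (-padicValRat p q) := by
    apply one_lt_zpow₀ (by exact_mod_cast hp.one_lt)
    omega
  linarith



lemma padicNorm_pow (p : ℕ) [hp : Fact p.Prime] (q : ℚ) (k : ℕ) : padicNorm p (q ^ k) = padicNorm p q ^ k := by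
  induction k with
  | zero => simp [padicNorm.one]
  | succ k ih => rw [pow_succ, pow_succ, padicNorm.mul, ih]

lemma keybound (n p : ℕ) [hp : Fact p.Prime] (Γ : Subgroup (GL (Fin n) ℚ))
    (hb : ∃ g : GL (Fin n) ℚ_[p], ∀ γ ∈ Γ, ∀ i j : Fin n,
        ‖((g⁻¹ * Units.map ((Rat.castHom ℚ_[p]).mapMatrix.toMonoidHom) γ * g :
            GL (Fin n) ℚ_[p]) : Matrix (Fin n) (Fin n) ℚ_[p]) i j‖ ≤ 1) :
    ∃ c : ℕ, ∀ γ ∈ Γ, ∀ i j : Fin n,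
      padicNorm p (((γ : GL (Fin n) ℚ) : Matrix (Fin n) (Fin n) ℚ) i j) ≤ (p : ℚ) ^ c := by
  rcases Nat.eq_zero_or_pos n with hn | hn
  · exact ⟨0, fun γ _ i => by subst hn; exact i.elim0⟩
  obtain ⟨g, hg⟩ := hb
  haveI : Nonempty (Fin n) := ⟨⟨0, hn⟩⟩
  set C1 : ℝ := Finset.univ.sup' Finset.univ_nonempty
    (fun ij : Fin n × Fin n => ‖(g : Matrix (Fin n) (Fin n) ℚ_[p]) ij.1 ij.2‖) with hC1
  set C2 : ℝ := Finset.univ.sup' Finset.univ_nonempty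
    (fun ij : Fin n × Fin n => ‖((g⁻¹ : GL (Fin n) ℚ_[p]) : Matrix (Fin n) (Fin n) ℚ_[p]) ij.1 ij.2‖)
    with hC2
  have hC1le : ∀ i j, ‖(g : Matrix (Fin n) (Fin n) ℚ_[p]) i j‖ ≤ C1 := fun i j =>
    Finset.le_sup' (fun ij : Fin n × Fin n => ‖(g : Matrix (Fin n) (Fin n) ℚ_[p]) ij.1 ij.2‖)
      (Finset.mem_univ (i, j))
  have hC2le : ∀ i j, ‖((g⁻¹ : GL (Fin n) ℚ_[p]) : Matrix (Fin n) (Fin n) ℚ_[p]) i j‖ ≤ C2 :=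
    fun i j =>
    Finset.le_sup'
      (fun ij : Fin n × Fin n =>
        ‖((g⁻¹ : GL (Fin n) ℚ_[p]) : Matrix (Fin n) (Fin n) ℚ_[p]) ij.1 ij.2‖)
      (Finset.mem_univ (i, j))
  have hC1n : 0 ≤ C1 := le_trans (norm_nonneg _) (hC1le ⟨0, hn⟩ ⟨0, hn⟩)
  have hC2n : 0 ≤ C2 := le_trans (norm_nonneg _) (hC2le ⟨0, hn⟩ ⟨0, hn⟩)
  obtain ⟨c, hc⟩ : ∃ c : ℕ, C1 * C2 ≤ (p : ℝ) ^ c := by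
    obtain ⟨c, hc⟩ := pow_unbounded_of_one_lt (R := ℝ) (C1 * C2)
      (show (1:ℝ) < (p:ℝ) by exact_mod_cast hp.1.one_lt)
    exact ⟨c, hc.le⟩
  refine ⟨c, fun γ hγ i j => ?_⟩
  -- the matrix of γ over ℚ_[p]
  set γ' : GL (Fin n) ℚ_[p] := Units.map ((Rat.castHom ℚ_[p]).mapMatrix.toMonoidHom) γ with hγ'
  set X : Matrix (Fin n) (Fin n) ℚ_[p] :=
    ((g⁻¹ * γ' * g : GL (Fin n) ℚ_[p]) : Matrix (Fin n) (Fin n) ℚ_[p]) with hX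
  have hXle : ∀ i j, ‖X i j‖ ≤ 1 := fun i j => hg γ hγ i j
  have hA : (γ' : Matrix (Fin n) (Fin n) ℚ_[p]) =
      (g : Matrix (Fin n) (Fin n) ℚ_[p]) * X *
        ((g⁻¹ : GL (Fin n) ℚ_[p]) : Matrix (Fin n) (Fin n) ℚ_[p]) := by
    have : γ' = g * (g⁻¹ * γ' * g) * g⁻¹ := by group
    rw [hX, ← Units.val_mul, ← Units.val_mul, ← this]
  have hnorm : ‖(γ' : Matrix (Fin n) (Fin n) ℚ_[p]) i j‖ ≤ C1 * C2 := by
    rw [hA]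
    rw [Matrix.mul_apply]
    refine IsUltrametricDist.norm_sum_le_of_forall_le_of_nonneg
      (mul_nonneg hC1n hC2n) (fun l _ => ?_)
    rw [norm_mul, Matrix.mul_apply]
    have h1 : ‖∑ k, (g : Matrix (Fin n) (Fin n) ℚ_[p]) i k * X k l‖ ≤ C1 := by
      refine IsUltrametricDist.norm_sum_le_of_forall_le_of_nonneg hC1n (fun k _ => ?_)
      rw [norm_mul]
      have := mul_le_mul (hC1le i k) (hXle k l) (norm_nonneg _) hC1n
      simpa using this
    exact mul_le_mul h1 (hC2le l j) (norm_nonneg _) hC1n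
  have hentry : (γ' : Matrix (Fin n) (Fin n) ℚ_[p]) i j =
      ((((γ : GL (Fin n) ℚ) : Matrix (Fin n) (Fin n) ℚ) i j : ℚ) : ℚ_[p]) := by
    rw [hγ']
    rfl
  rw [hentry, Padic.eq_padicNorm] at hnorm
  have : (padicNorm p (((γ : GL (Fin n) ℚ) : Matrix (Fin n) (Fin n) ℚ) i j) : ℝ) ≤ (p:ℝ)^c :=
    le_trans hnorm (le_trans hc (le_refl _))
  exact_mod_cast this


section
variable {n : ℕ}

lemma padicNorm_le_one_of_not_dvd_den {p : ℕ} [hp : Fact p.Prime] {q : ℚ} (h : ¬ p ∣ q.den) :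
    padicNorm p q ≤ 1 := by
  by_cases hq : q = 0
  · simp [hq]
  rw [padicNorm.eq_zpow_of_nonzero hq]
  apply zpow_le_one_of_nonpos₀ (by exact_mod_cast hp.1.one_le)
  rw [padicValRat]
  have h2 : padicValNat p q.den = 0 := padicValNat.eq_zero_of_not_dvd h
  omega

def intSubgroup (n p : ℕ) [Fact p.Prime] : Subgroup (GL (Fin n) ℚ) where
  carrier := {u | (∀ i j, padicNorm p ((u : Matrix (Fin n) (Fin n) ℚ) i j) ≤ 1) ∧
    (∀ i j, padicNorm p (((u⁻¹ : GL (Fin n) ℚ) : Matrix (Fin n) (Fin n) ℚ) i j) ≤ 1)}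
  one_mem' := by
    refine ⟨fun i j => ?_, fun i j => ?_⟩ <;>
    · by_cases h : i = j <;>
        simp [inv_one, Units.val_one, Matrix.one_apply, h]
  mul_mem' := by
    rintro a b ⟨ha, ha'⟩ ⟨hb, hb'⟩
    constructor
    · intro i j
      show padicNorm p (((a * b : GL (Fin n) ℚ) : Matrix (Fin n) (Fin n) ℚ) i j) ≤ 1
      rw [Units.val_mul, Matrix.mul_apply]
      refine padicNorm.sum_le' (fun k _ => ?_) zero_le_one
      rw [padicNorm.mul]
      exact mul_le_one₀ (ha i k) (padicNorm.nonneg _) (hb k j)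
    · intro i j
      show padicNorm p ((((a*b)⁻¹ : GL (Fin n) ℚ) : Matrix (Fin n) (Fin n) ℚ) i j) ≤ 1
      rw [_root_.mul_inv_rev, Units.val_mul, Matrix.mul_apply]
      refine padicNorm.sum_le' (fun k _ => ?_) zero_le_one
      rw [padicNorm.mul]
      exact mul_le_one₀ (hb' i k) (padicNorm.nonneg _) (ha' k j)
  inv_mem' := by
    rintro a ⟨ha, ha'⟩
    exact ⟨ha', by simpa using ha⟩

end

lemma denom_bound (n : ℕ) (Γ : Subgroup (GL (Fin n) ℚ)) (hfg : Group.FG Γ)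
    (hbound : ∀ (p : ℕ) [Fact p.Prime],
      ∃ g : GL (Fin n) ℚ_[p], ∀ γ ∈ Γ, ∀ i j : Fin n,
        ‖((g⁻¹ * Units.map ((Rat.castHom ℚ_[p]).mapMatrix.toMonoidHom) γ * g :
            GL (Fin n) ℚ_[p]) : Matrix (Fin n) (Fin n) ℚ_[p]) i j‖ ≤ 1)
    (padicNorm_pow : ∀ (p : ℕ) [Fact p.Prime] (q : ℚ) (k : ℕ),
        padicNorm p (q ^ k) = padicNorm p q ^ k)
    (int_of_padicNorm_le_one : ∀ q : ℚ, (∀ p : ℕ, p.Prime → padicNorm p q ≤ 1) → ∃ z : ℤ, q = z)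
    (keybound : ∀ (p : ℕ) [Fact p.Prime],
      (∃ g : GL (Fin n) ℚ_[p], ∀ γ ∈ Γ, ∀ i j : Fin n,
        ‖((g⁻¹ * Units.map ((Rat.castHom ℚ_[p]).mapMatrix.toMonoidHom) γ * g :
            GL (Fin n) ℚ_[p]) : Matrix (Fin n) (Fin n) ℚ_[p]) i j‖ ≤ 1) →
      ∃ c : ℕ, ∀ γ ∈ Γ, ∀ i j : Fin n,
        padicNorm p (((γ : GL (Fin n) ℚ) : Matrix (Fin n) (Fin n) ℚ) i j) ≤ (p : ℚ) ^ c) :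
    ∃ M : ℕ, 0 < M ∧ ∀ γ ∈ Γ, ∀ i j : Fin n, ∃ z : ℤ,
      (M : ℚ) * (((γ : GL (Fin n) ℚ) : Matrix (Fin n) (Fin n) ℚ) i j) = z := by
  obtain ⟨T, hT⟩ := (Group.fg_iff_subgroup_fg Γ).mp hfg
  set f : GL (Fin n) ℚ → ℕ := fun t => ∏ i, ∏ j,
    (((t : Matrix (Fin n) (Fin n) ℚ) i j).den *
      (((t⁻¹ : GL (Fin n) ℚ) : Matrix (Fin n) (Fin n) ℚ) i j).den) with hf
  set D : ℕ := ∏ t ∈ T, f t with hD'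
  have hD : 0 < D := by
    apply Finset.prod_pos
    intro t _
    apply Finset.prod_pos
    intro i _
    apply Finset.prod_pos
    intro j _
    exact mul_pos ((((t : Matrix (Fin n) (Fin n) ℚ)) i j).pos)
      ((((t⁻¹ : GL (Fin n) ℚ) : Matrix (Fin n) (Fin n) ℚ) i j).pos)
  -- entries of elements of Γ are ℓ-integral for ℓ not dividing D
  have hint : ∀ ℓ : ℕ, ℓ.Prime → ¬ ℓ ∣ D → ∀ γ ∈ Γ, ∀ i j,
      padicNorm ℓ (((γ : GL (Fin n) ℚ) : Matrix (Fin n) (Fin n) ℚ) i j) ≤ 1 := by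
    intro ℓ hℓ hnd
    haveI := Fact.mk hℓ
    suffices h : Γ ≤ intSubgroup n ℓ by
      intro γ hγ
      exact (h hγ).1
    rw [← hT, Subgroup.closure_le]
    intro t ht
    have hdvd : ∀ i j, (((t : Matrix (Fin n) (Fin n) ℚ) i j).den ∣ D) ∧
        ((((t⁻¹ : GL (Fin n) ℚ) : Matrix (Fin n) (Fin n) ℚ) i j).den ∣ D) := by
      intro i j
      have h1 : f t ∣ D := Finset.dvd_prod_of_mem f ht
      have h2 : (∏ j', (((t : Matrix (Fin n) (Fin n) ℚ) i j').den *
          (((t⁻¹ : GL (Fin n) ℚ) : Matrix (Fin n) (Fin n) ℚ) i j').den)) ∣ f t :=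
        Finset.dvd_prod_of_mem _ (Finset.mem_univ i)
      have h3 : ((((t : Matrix (Fin n) (Fin n) ℚ)) i j).den *
          (((t⁻¹ : GL (Fin n) ℚ) : Matrix (Fin n) (Fin n) ℚ) i j).den) ∣
          ∏ j', (((t : Matrix (Fin n) (Fin n) ℚ) i j').den *
          (((t⁻¹ : GL (Fin n) ℚ) : Matrix (Fin n) (Fin n) ℚ) i j').den) :=
        Finset.dvd_prod_of_mem _ (Finset.mem_univ j)
      have h4 := dvd_trans h3 (dvd_trans h2 h1)
      exact ⟨dvd_trans (dvd_mul_right _ _) h4, dvd_trans (dvd_mul_left _ _) h4⟩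
    constructor
    · intro i j
      exact padicNorm_le_one_of_not_dvd_den (fun hc => hnd (dvd_trans hc (hdvd i j).1))
    · intro i j
      exact padicNorm_le_one_of_not_dvd_den (fun hc => hnd (dvd_trans hc (hdvd i j).2))
  -- a bound for every prime
  have key : ∀ ℓ : ℕ, ∃ c : ℕ, ℓ.Prime → ∀ γ ∈ Γ, ∀ i j,
      padicNorm ℓ (((γ : GL (Fin n) ℚ) : Matrix (Fin n) (Fin n) ℚ) i j) ≤ (ℓ:ℚ) ^ c := by
    intro ℓ
    by_cases h : ℓ.Prime
    · haveI := Fact.mk h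
      obtain ⟨c, hc⟩ := keybound ℓ (hbound ℓ)
      exact ⟨c, fun _ => hc⟩
    · exact ⟨0, fun h' => absurd h' h⟩
  choose c hc using key
  refine ⟨∏ ℓ ∈ D.primeFactors, ℓ ^ c ℓ, ?_, ?_⟩
  · apply Finset.prod_pos
    intro ℓ hℓ
    exact pow_pos (Nat.mem_primeFactors.mp hℓ).1.pos _
  intro γ hγ i j
  set M : ℕ := ∏ ℓ ∈ D.primeFactors, ℓ ^ c ℓ with hM'
  apply int_of_padicNorm_le_one
  intro ℓ hℓ
  haveI := Fact.mk hℓ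
  rw [padicNorm.mul]
  by_cases hdD : ℓ ∣ D
  · have hmem : ℓ ∈ D.primeFactors := Nat.mem_primeFactors.mpr ⟨hℓ, hdD, hD.ne'⟩
    set R : ℕ := ∏ m ∈ D.primeFactors.erase ℓ, m ^ c m with hR
    have hsplit : M = ℓ ^ c ℓ * R := (Finset.mul_prod_erase _ _ hmem).symm
    have hMnorm : padicNorm ℓ (M:ℚ) ≤ ((ℓ:ℚ)⁻¹) ^ c ℓ := by
      have : ((M:ℕ):ℚ) = ((ℓ:ℚ)) ^ c ℓ * ((R:ℕ):ℚ) := by rw [hsplit]; push_cast; ring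
      rw [this, padicNorm.mul, padicNorm_pow ℓ, padicNorm.padicNorm_p_of_prime]
      calc ((ℓ:ℚ)⁻¹) ^ c ℓ * padicNorm ℓ ((R:ℕ):ℚ) ≤ ((ℓ:ℚ)⁻¹) ^ c ℓ * 1 := by
            apply mul_le_mul_of_nonneg_left (padicNorm.of_nat R)
            positivity
        _ = ((ℓ:ℚ)⁻¹) ^ c ℓ := mul_one _
    have hq := hc ℓ hℓ γ hγ i j
    calc padicNorm ℓ (M:ℚ) * padicNorm ℓ (((γ : GL (Fin n) ℚ) : Matrix (Fin n) (Fin n) ℚ) i j)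
        ≤ ((ℓ:ℚ)⁻¹) ^ c ℓ * (ℓ:ℚ) ^ c ℓ :=
          mul_le_mul hMnorm hq (padicNorm.nonneg _) (by positivity)
      _ = 1 := by
          rw [← mul_pow, inv_mul_cancel₀ (by exact_mod_cast hℓ.pos.ne'), one_pow]
  · have h1 : padicNorm ℓ (M:ℚ) ≤ 1 := padicNorm.of_nat M
    exact mul_le_one₀ h1 (padicNorm.nonneg _) (hint ℓ hℓ hdD γ hγ i j)


lemma conj_into_int (n : ℕ) (Γ : Subgroup (GL (Fin n) ℚ)) (M : ℕ) (hM : 0 < M)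
    (hb : ∀ γ ∈ Γ, ∀ i j : Fin n, ∃ z : ℤ,
      (M : ℚ) * (((γ : GL (Fin n) ℚ) : Matrix (Fin n) (Fin n) ℚ) i j) = z) :
    ∃ g : GL (Fin n) ℚ, ∀ γ ∈ Γ, ∀ i j : Fin n,
      ∃ z : ℤ, ((g⁻¹ * γ * g : GL (Fin n) ℚ) : Matrix (Fin n) (Fin n) ℚ) i j = z := by
  classical
  rcases Nat.eq_zero_or_pos n with hn | hn
  · exact ⟨1, fun γ _ i => by subst hn; exact i.elim0⟩
  haveI : Nonempty (Fin n) := ⟨⟨0, hn⟩⟩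
  set S : Set (Fin n → ℚ) := {x | ∃ γ ∈ Γ, ∃ k : Fin n,
    x = ((γ : GL (Fin n) ℚ) : Matrix (Fin n) (Fin n) ℚ).mulVec (Pi.single k 1)} with hS
  set L : Submodule ℤ (Fin n → ℚ) := Submodule.span ℤ S with hL
  -- the standard basis vectors are in L
  have hsingle : ∀ k : Fin n, (Pi.single k 1 : Fin n → ℚ) ∈ L := by
    intro k
    apply Submodule.subset_span
    refine ⟨1, Γ.one_mem, k, ?_⟩
    rw [Units.val_one, Matrix.one_mulVec]
  -- L is contained in the span of (1/M) times the standard basis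
  set vM : Fin n → (Fin n → ℚ) := fun i => (M : ℚ)⁻¹ • (Pi.single i 1 : Fin n → ℚ) with hvM
  set W : Submodule ℤ (Fin n → ℚ) := Submodule.span ℤ (Set.range vM) with hW
  have hMne : (M : ℚ) ≠ 0 := by exact_mod_cast hM.ne'
  have hLW : L ≤ W := by
    rw [hL, Submodule.span_le]
    rintro x ⟨γ, hγ, k, rfl⟩
    set A := ((γ : GL (Fin n) ℚ) : Matrix (Fin n) (Fin n) ℚ) with hA
    have hx : ∀ j, A.mulVec (Pi.single k 1) j = A j k := by
      intro j; simp [Matrix.mulVec_single]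
    have : A.mulVec (Pi.single k 1) = ∑ j, (Classical.choose (hb γ hγ j k) : ℤ) • vM j := by
      funext l
      rw [Finset.sum_apply]
      have hz := Classical.choose_spec (hb γ hγ l k)
      have : ∀ j, (((Classical.choose (hb γ hγ j k) : ℤ)) • vM j) l =
          if l = j then ((Classical.choose (hb γ hγ j k) : ℤ) : ℚ) * (M:ℚ)⁻¹ else 0 := by
        intro j
        rw [← Int.cast_smul_eq_zsmul ℚ]
        by_cases h : l = j
        · subst h; simp [hvM, Pi.single_apply]
        · simp [hvM, Pi.single_apply, h]
      rw [Finset.sum_congr rfl (fun j _ => this j), Finset.sum_ite_eq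
        (Finset.univ : Finset (Fin n)) l _, if_pos (Finset.mem_univ l)]
      rw [hx l]
      field_simp
      linarith [hz]
    rw [this]
    exact Submodule.sum_mem _ (fun j _ => Submodule.smul_mem _ _
      (Submodule.subset_span (Set.mem_range_self j)))
  -- basis of W
  have hsingleLI : LinearIndependent ℚ (fun i : Fin n => (Pi.single i 1 : Fin n → ℚ)) := by
    have := (Pi.basisFun ℚ (Fin n)).linearIndependent
    convert this using 1
    funext i
    rw [Pi.basisFun_apply]
  have hvMLIQ : LinearIndependent ℚ vM := by
    have := hsingleLI.units_smul (fun _ => Units.mk0 ((M:ℚ)⁻¹) (inv_ne_zero hMne))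
    convert this using 1
    funext i
    rfl
  have hvMLI : LinearIndependent ℤ vM := (LinearIndependent.iff_fractionRing ℤ ℚ).mpr hvMLIQ
  have bW : Basis (Fin n) ℤ W := Basis.span hvMLI
  haveI : Module.Finite ℤ W :=
    Module.Finite.iff_fg.mpr (Submodule.fg_span (Set.finite_range vM))
  haveI : IsNoetherian ℤ W := isNoetherian_of_fg_of_noetherian _
    (Submodule.fg_span (Set.finite_range vM))
  -- L is finite free of rank n
  set L' : Submodule ℤ W := L.comap W.subtype with hL'
  have eL : L' ≃ₗ[ℤ] L := Submodule.comapSubtypeEquivOfLe hLW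
  haveI : Module.Finite ℤ L' := Module.Finite.iff_fg.mpr (IsNoetherian.noetherian L')
  haveI : Module.Finite ℤ L := Module.Finite.equiv eL
  haveI : NoZeroSMulDivisors ℤ (Fin n → ℚ) := by
    constructor
    intro c x h
    by_cases hc : c = 0
    · exact Or.inl hc
    · refine Or.inr ?_
      have : (c : ℚ) • x = 0 := by rwa [Int.cast_smul_eq_zsmul]
      have := smul_eq_zero.mp this
      rcases this with h' | h'
      · exact absurd (by exact_mod_cast h' : (c:ℚ) = 0) (by exact_mod_cast hc)
      · exact h'
  haveI : NoZeroSMulDivisors ℤ L := by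
    constructor
    intro c x h
    have : c • (x : Fin n → ℚ) = 0 := by
      have := congrArg (Subtype.val) h
      simpa using this
    rcases smul_eq_zero.mp this with h' | h'
    · exact Or.inl h'
    · exact Or.inr (Subtype.ext h')
  haveI : Module.Free ℤ L := Module.free_of_finite_type_torsion_free'
  have hrank : finrank ℤ L = n := by
    have hup : finrank ℤ L ≤ n := by
      have h1 : finrank ℤ L' = finrank ℤ L := eL.finrank_eq
      have h2 : finrank ℤ L' ≤ finrank ℤ W := Submodule.finrank_le L'
      have h3 : finrank ℤ W = n := by
        rw [finrank_eq_card_basis bW, Fintype.card_fin]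
      omega
    have hlow : n ≤ finrank ℤ L := by
      set e : Fin n → L := fun i => ⟨Pi.single i 1, hsingle i⟩ with he
      have hLIe : LinearIndependent ℤ e := by
        have h1 : LinearIndependent ℤ (fun i : Fin n => (Pi.single i 1 : Fin n → ℚ)) :=
          (LinearIndependent.iff_fractionRing ℤ ℚ).mpr hsingleLI
        exact h1.of_comp L.subtype
      have := hLIe.fintype_card_le_finrank
      simpa using this
    omega
  set bL : Basis (Fin n) ℤ L := Module.finBasisOfFinrankEq ℤ L hrank with hbL
  set v : Fin n → (Fin n → ℚ) := fun i => (bL i : Fin n → ℚ) with hv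
  have hvLI : LinearIndependent ℚ v := by
    apply (LinearIndependent.iff_fractionRing ℤ ℚ).mp
    exact bL.linearIndependent.map' L.subtype (Submodule.ker_subtype L)
  set bQ : Basis (Fin n) ℚ (Fin n → ℚ) := basisOfLinearIndependentOfCardEqFinrank hvLI
    (by simp [Module.finrank_pi]) with hbQ
  have hbQv : ⇑bQ = v := coe_basisOfLinearIndependentOfCardEqFinrank _ _
  -- the base change matrix
  set P : Matrix (Fin n) (Fin n) ℚ := (Pi.basisFun ℚ (Fin n)).toMatrix ⇑bQ with hP
  haveI : Invertible P := (Pi.basisFun ℚ (Fin n)).invertibleToMatrix bQ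
  have hPapp : ∀ i j, P i j = v j i := by
    intro i j
    rw [hP, Basis.toMatrix_apply, Pi.basisFun_repr, hbQv]
  set g : GL (Fin n) ℚ := unitOfInvertible P with hg
  -- stability of L under Γ
  have hstab : ∀ γ ∈ Γ, ∀ x ∈ L,
      ((γ : GL (Fin n) ℚ) : Matrix (Fin n) (Fin n) ℚ).mulVec x ∈ L := by
    intro γ hγ x hx
    set φ : (Fin n → ℚ) →ₗ[ℤ] (Fin n → ℚ) :=
      (Matrix.mulVecLin ((γ : GL (Fin n) ℚ) : Matrix (Fin n) (Fin n) ℚ)).restrictScalars ℤ with hφ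
    have himg : φ '' S ⊆ S := by
      rintro y ⟨x', ⟨γ', hγ', k, rfl⟩, rfl⟩
      refine ⟨γ * γ', Γ.mul_mem hγ hγ', k, ?_⟩
      show ((γ : GL (Fin n) ℚ) : Matrix (Fin n) (Fin n) ℚ).mulVec _ = _
      rw [Matrix.mulVec_mulVec, Units.val_mul]
    have : φ x ∈ Submodule.map φ L := Submodule.mem_map_of_mem hx
    rw [hL, Submodule.map_span] at this
    have hle : Submodule.span ℤ (φ '' S) ≤ Submodule.span ℤ S := Submodule.span_mono himg
    exact hL ▸ hle this
  refine ⟨g, fun γ hγ i j => ?_⟩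
  -- the integral matrix X
  have hyL : ∀ j, ((γ : GL (Fin n) ℚ) : Matrix (Fin n) (Fin n) ℚ).mulVec (v j) ∈ L :=
    fun j => hstab γ hγ _ (bL j).2
  set w : Fin n → L := fun j => ⟨_, hyL j⟩ with hw
  set X : Matrix (Fin n) (Fin n) ℚ := Matrix.of (fun i j => ((bL.repr (w j) i : ℤ) : ℚ)) with hX
  have hsum : ∀ j, ((γ : GL (Fin n) ℚ) : Matrix (Fin n) (Fin n) ℚ).mulVec (v j) =
      ∑ k, ((bL.repr (w j) k : ℤ) : ℚ) • v k := by
    intro j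
    have h1 : (∑ k, bL.repr (w j) k • bL k : L) = w j := bL.sum_repr (w j)
    have h2 := congrArg (Subtype.val) h1
    rw [Submodule.coe_sum] at h2
    have h3 : ∀ k, ((bL.repr (w j) k • bL k : L) : Fin n → ℚ) =
        ((bL.repr (w j) k : ℤ) : ℚ) • v k := by
      intro k
      rw [Submodule.coe_smul_of_tower, Int.cast_smul_eq_zsmul]
    rw [Finset.sum_congr rfl (fun k _ => h3 k)] at h2
    rw [h2]
  have hmain : ((γ : GL (Fin n) ℚ) : Matrix (Fin n) (Fin n) ℚ) * P = P * X := by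
    ext i j
    rw [Matrix.mul_apply, Matrix.mul_apply]
    have hlhs : ∑ k, ((γ : GL (Fin n) ℚ) : Matrix (Fin n) (Fin n) ℚ) i k * P k j =
        ((γ : GL (Fin n) ℚ) : Matrix (Fin n) (Fin n) ℚ).mulVec (v j) i := by
      rw [Matrix.mulVec, dotProduct]
      exact Finset.sum_congr rfl (fun k _ => by rw [hPapp k j])
    rw [hlhs, hsum j]
    rw [Finset.sum_apply]
    refine Finset.sum_congr rfl (fun k _ => ?_)
    rw [hPapp i k, Pi.smul_apply, smul_eq_mul]
    exact mul_comm _ _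
  have hfinal : ((g⁻¹ * γ * g : GL (Fin n) ℚ) : Matrix (Fin n) (Fin n) ℚ) = X := by
    have h0 : ((g : GL (Fin n) ℚ) : Matrix (Fin n) (Fin n) ℚ) = P := rfl
    have h1 : ((g⁻¹ * γ * g : GL (Fin n) ℚ) : Matrix (Fin n) (Fin n) ℚ) =
        ((g⁻¹ : GL (Fin n) ℚ) : Matrix (Fin n) (Fin n) ℚ) *
          (((γ : GL (Fin n) ℚ) : Matrix (Fin n) (Fin n) ℚ) * P) := by
      rw [Units.val_mul, Units.val_mul, h0, mul_assoc]
    rw [h1, hmain, ← mul_assoc]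
    have h2 : ((g⁻¹ : GL (Fin n) ℚ) : Matrix (Fin n) (Fin n) ℚ) * P = 1 := by
      rw [← h0, ← Units.val_mul, inv_mul_cancel, Units.val_one]
    rw [h2, one_mul]
  rw [hfinal]
  exact ⟨bL.repr (w j) i, rfl⟩

/-- Bass: let `Γ` be a finitely generated subgroup of `GL(n,ℚ)` such that
for every prime `p` the image of `Γ` in `GL(n,ℚ_p)` is bounded, i.e. conjugate in
`GL(n,ℚ_p)` into `GL(n,ℤ_p)` (all matrix entries of `p`-adic norm `≤ 1`). Then `Γ` is
conjugate in `GL(n,ℚ)` to a subgroup of `GL(n,ℤ)` (all entries integers). -/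
theorem stmt8 (n : ℕ) (Γ : Subgroup (GL (Fin n) ℚ)) (hfg : Group.FG Γ)
    (hbound : ∀ (p : ℕ) [Fact p.Prime],
      ∃ g : GL (Fin n) ℚ_[p], ∀ γ ∈ Γ, ∀ i j : Fin n,
        ‖((g⁻¹ * Units.map ((Rat.castHom ℚ_[p]).mapMatrix.toMonoidHom) γ * g :
            GL (Fin n) ℚ_[p]) : Matrix (Fin n) (Fin n) ℚ_[p]) i j‖ ≤ 1) :
    ∃ g : GL (Fin n) ℚ, ∀ γ ∈ Γ, ∀ i j : Fin n,
      ∃ z : ℤ, ((g⁻¹ * γ * g : GL (Fin n) ℚ) : Matrix (Fin n) (Fin n) ℚ) i j = z := by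
  obtain ⟨M, hM, hb⟩ := denom_bound n Γ hfg hbound
    (fun p _ q k => padicNorm_pow p q k)
    int_of_padicNorm_le_one
    (fun p _ h => keybound n p Γ h)
  exact conj_into_int n Γ M hM hb
end
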